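/- arXiv:1404.0357 — 2 statements merged into one kernel-verified Lean document; each statement's English description precedes it below -/
import Mathlib

section
/- For every ε ∈ L⁰₊₊, the set U_ε := {Y ∈ L⁰ : ∃ finite I ⊆ ℕ such that |Y·1_{A_i}| ≤ ε a.e. for all i ∉ I} is not closed under countable concatenations: the element ε+1 satisfies (ε+1)·1_{A_n} ∈ U_ε for every n (and hence 1_{A_n}·(ε+1) = 1_{A_n}·X_n with X_n := (ε+1)·1_{A_n} ∈ U_ε), yet ε+1 ∉ U_ε. -/
/-!
Each `(ε + 1) · 1_{A_n}` vanishes off `A_n`, so it lies in `U_ε` with exceptional set `{n}`, and it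
agrees with `ε + 1` on `A_n`. But `ε + 1 > ε` everywhere, so on every `A_i` (all of positive measure)
the bound `|(ε + 1) · 1_{A_i}| ≤ ε` fails: no finite exceptional set works for `ε + 1` itself.
-/

open MeasureTheory Filter Pointwise

variable {Ω : Type*} [MeasurableSpace Ω] (P : MeasureTheory.Measure Ω ) [IsProbabilityMeasure P]

noncomputable instance : CommRing (Ω →ₘ[P] ℝ) :=
  { (inferInstance : AddCommGroup (Ω →ₘ[P] ℝ)),
    (inferInstance : CommMonoid (Ω →ₘ[P] ℝ)) with
    left_distrib := fun f g h => AEEqFun.ext (by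
      filter_upwards [AEEqFun.coeFn_mul f (g + h), AEEqFun.coeFn_add g h,
        AEEqFun.coeFn_add (f * g) (f * h), AEEqFun.coeFn_mul f g, AEEqFun.coeFn_mul f h]
        with ω h1 h2 h3 h4 h5
      simp only [Pi.mul_apply, Pi.add_apply] at *
      rw [h1, h2, h3, h4, h5, mul_add])
    right_distrib := fun f g h => AEEqFun.ext (by
      filter_upwards [AEEqFun.coeFn_mul (f + g) h, AEEqFun.coeFn_add f g,
        AEEqFun.coeFn_add (f * h) (g * h), AEEqFun.coeFn_mul f h, AEEqFun.coeFn_mul g h]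
        with ω h1 h2 h3 h4 h5
      simp only [Pi.mul_apply, Pi.add_apply] at *
      rw [h1, h2, h3, h4, h5, add_mul])
    zero_mul := fun f => AEEqFun.ext (by
      filter_upwards [AEEqFun.coeFn_mul 0 f, AEEqFun.coeFn_zero (β := ℝ) (μ := P)]
        with ω h1 h2
      simp only [Pi.mul_apply, Pi.zero_apply] at *
      rw [h1, h2, zero_mul])
    mul_zero := fun f => AEEqFun.ext (by
      filter_upwards [AEEqFun.coeFn_mul f 0, AEEqFun.coeFn_zero (β := ℝ) (μ := P)]
        with ω h1 h2
      simp only [Pi.mul_apply, Pi.zero_apply] at *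
      rw [h1, h2, mul_zero]) }

/-- `L⁰₊₊`: the set of a.e. strictly positive elements. -/
def L0pp (Y : Ω →ₘ[P] ℝ) : Prop := ∀ᵐ ω ∂P, 0 < Y ω

/-- The equivalence class of the indicator function of a measurable set. -/
noncomputable def ind (A : Set Ω) (hA : MeasurableSet A) : Ω →ₘ[P] ℝ :=
  AEEqFun.mk (A.indicator fun _ => (1 : ℝ)) (aestronglyMeasurable_const.indicator hA)

section ModuleDefs

variable {E : Type*} [AddCommGroup E] [Module (Ω →ₘ[P] ℝ) E]

/-- `L⁰`-convexity of a subset of an `L⁰`-module. -/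
def IsL0Convex (U : Set E) : Prop :=
  ∀ X₁ ∈ U, ∀ X₂ ∈ U, ∀ Y : Ω →ₘ[P] ℝ, 0 ≤ Y → Y ≤ 1 → Y • X₁ + (1 - Y) • X₂ ∈ U

/-- `L⁰`-absorbency of a subset of an `L⁰`-module. -/
def IsL0Absorbent (U : Set E) : Prop :=
  ∀ X : E, ∃ Y : Ω →ₘ[P] ℝ, L0pp P Y ∧ X ∈ Y • U

/-- `L⁰`-balancedness of a subset of an `L⁰`-module. -/
def IsL0Balanced (U : Set E) : Prop :=
  ∀ X ∈ U, ∀ Y : Ω →ₘ[P] ℝ, |Y| ≤ 1 → Y • X ∈ U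

/-- Closedness under countable concatenations. -/
def IsConcatClosed (C : Set E) : Prop :=
  ∀ (A : ℕ → Set Ω) (hA : ∀ n, MeasurableSet (A n)),
    Pairwise (Function.onFun Disjoint A) → (⋃ n, A n) = Set.univ →
    ∀ X : E, (∀ n, ∃ Xn ∈ C, ind P (A n) (hA n) • X = ind P (A n) (hA n) • Xn) → X ∈ C

/-- `L⁰`-seminorm. -/
def IsL0Seminorm (p : E → (Ω →ₘ[P] ℝ)) : Prop :=
  (∀ X : E, 0 ≤ p X) ∧ (∀ (Y : Ω →ₘ[P] ℝ) (X : E), p (Y • X) = |Y| * p X) ∧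
    (∀ X₁ X₂ : E, p (X₁ + X₂) ≤ p X₁ + p X₂)

/-- The set whose essential infimum is the gauge `p_K(X)`. -/
def gaugeSet (K : Set E) (X : E) : Set (Ω →ₘ[P] ℝ) :=
  {Y : Ω →ₘ[P] ℝ | 0 ≤ Y ∧ X ∈ Y • K}

end ModuleDefs

/-- The set `U_ε` of the counterexample: `Y ∈ U_ε` iff `|Y·1_{A_i}| ≤ ε` a.e. for all `i`
outside some finite set `I ⊆ ℕ`. -/
def Uset (A : ℕ → Set Ω) (hA : ∀ n, MeasurableSet (A n)) (ε : Ω →ₘ[P] ℝ) :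
    Set (Ω →ₘ[P] ℝ) :=
  {Y : Ω →ₘ[P] ℝ | ∃ I : Finset ℕ, ∀ i ∉ I, |Y * ind P (A i) (hA i)| ≤ ε}

section

variable {α : Type*} [MeasurableSpace α] {μ : Measure α}

theorem coeFn_ind (A : Set α) (hA : MeasurableSet A) :
    ind μ A hA =ᵐ[μ] A.indicator 1 :=
  AEEqFun.coeFn_mk _ _

theorem ind_mul_ind (A B : Set α) (hA : MeasurableSet A) (hB : MeasurableSet B) :
    ind μ A hA * ind μ B hB = ind μ (A ∩ B) (hA.inter hB) := by
  apply AEEqFun.ext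
  filter_upwards [AEEqFun.coeFn_mul (ind μ A hA) (ind μ B hB), coeFn_ind A hA, coeFn_ind B hB,
    coeFn_ind (A ∩ B) (hA.inter hB)] with ω hmul hAω hBω hABω
  rw [hmul, Pi.mul_apply, hAω, hBω, hABω, Set.inter_indicator_one, Pi.mul_apply]

theorem ind_mul_self (A : Set α) (hA : MeasurableSet A) :
    ind μ A hA * ind μ A hA = ind μ A hA := by
  rw [ind_mul_ind]
  congr 1
  exact Set.inter_self A

theorem ind_mul_ind_of_disjoint {A B : Set α} (hA : MeasurableSet A) (hB : MeasurableSet B)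
    (hAB : Disjoint A B) : ind μ A hA * ind μ B hB = 0 := by
  rw [ind_mul_ind]
  simp only [ind, hAB.inter_eq, Set.indicator_empty]
  rfl

theorem ae_abs_le_of_abs_mul_ind_le {A : Set α} (hA : MeasurableSet A) {Y ε : α →ₘ[μ] ℝ}
    (h : |Y * ind μ A hA| ≤ ε) : ∀ᵐ ω ∂μ, ω ∈ A → |Y ω| ≤ ε ω := by
  filter_upwards [AEEqFun.coeFn_le.mpr h, AEEqFun.coeFn_abs (Y * ind μ A hA),
    AEEqFun.coeFn_mul Y (ind μ A hA), coeFn_ind A hA] with ω hle habs hmul hind hω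
  rwa [habs, hmul, Pi.mul_apply, hind, Set.indicator_of_mem hω, Pi.one_apply,
    mul_one] at hle

theorem L0pp.nonneg {ε : α →ₘ[μ] ℝ} (hε : L0pp μ ε) : 0 ≤ ε := by
  rw [← AEEqFun.coeFn_le]
  filter_upwards [hε, AEEqFun.coeFn_zero (β := ℝ) (μ := μ)] with ω hεω hzero
  rw [hzero]
  exact hεω.le

variable {A : ℕ → Set α} (hA : ∀ n, MeasurableSet (A n))

theorem mul_ind_mem_Uset (hdisj : Pairwise (Function.onFun Disjoint A)) {ε : α →ₘ[μ] ℝ}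
    (hε : 0 ≤ ε) (Y : α →ₘ[μ] ℝ) (n : ℕ) : Y * ind μ (A n) (hA n) ∈ Uset μ A hA ε := by
  refine ⟨{n}, fun i hi => ?_⟩
  have hni : n ≠ i := fun h => hi (Finset.mem_singleton.mpr h.symm)
  -- `abs_zero` needs `AddLeftMono`, which `α →ₘ[μ] ℝ` lacks, so `|0| = 0` is unfolded by hand.
  rwa [mul_assoc, ind_mul_ind_of_disjoint _ _ (hdisj hni), mul_zero, abs, neg_zero, sup_idem]

theorem notMem_Uset_of_lt_abs (hpos : ∀ n, 0 < μ (A n)) {ε Y : α →ₘ[μ] ℝ}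
    (hlt : ∀ᵐ ω ∂μ, ε ω < |Y ω|) : Y ∉ Uset μ A hA ε := by
  rintro ⟨I, hI⟩
  obtain ⟨i, hi⟩ := Infinite.exists_notMem_finset I
  have hnull : ∀ᵐ ω ∂μ, ω ∉ A i := by
    filter_upwards [ae_abs_le_of_abs_mul_ind_le (hA i) (hI i hi), hlt] with ω hle hltω hω
    exact (hle hω).not_gt hltω
  exact (hpos i).ne' (measure_eq_zero_iff_ae_notMem.mpr hnull)

end

theorem stmt_12_general {Ω : Type*} [MeasurableSpace Ω] (P : MeasureTheory.Measure Ω)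
    (A : ℕ → Set Ω) (hA : ∀ n, MeasurableSet (A n))
    (hdisj : Pairwise (Function.onFun Disjoint A)) (hcover : (⋃ n, A n) = Set.univ)
    (hpos : ∀ n, 0 < P (A n))
    (ε : Ω →ₘ[P] ℝ) (hε : L0pp P ε) :
    (∀ n, (ε + 1) * ind P (A n) (hA n) ∈ Uset P A hA ε) ∧
    (∀ n, ind P (A n) (hA n) * (ε + 1) =
      ind P (A n) (hA n) * ((ε + 1) * ind P (A n) (hA n))) ∧
    (ε + 1) ∉ Uset P A hA ε ∧
    ¬ IsConcatClosed P (Uset P A hA ε) := by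
  have hmem := mul_ind_mem_Uset hA hdisj hε.nonneg (ε + 1)
  have hagree : ∀ n, ind P (A n) (hA n) * (ε + 1) =
      ind P (A n) (hA n) * ((ε + 1) * ind P (A n) (hA n)) := fun n => by
    rw [mul_left_comm, ind_mul_self, mul_comm]
  have hnotMem : ε + 1 ∉ Uset P A hA ε := by
    refine notMem_Uset_of_lt_abs hA hpos ?_
    filter_upwards [AEEqFun.coeFn_add ε 1, AEEqFun.coeFn_one (β := ℝ) (μ := P)] with ω hadd hone
    rw [hadd, Pi.add_apply, hone, Pi.one_apply]
    exact (lt_add_one _).trans_le (le_abs_self _)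
  refine ⟨hmem, hagree, hnotMem, fun hclosed => hnotMem ?_⟩
  exact hclosed A hA hdisj hcover (ε + 1) fun n => ⟨_, hmem n, hagree n⟩

/-- `U_ε` is not closed under countable concatenations: each
`(ε+1)·1_{A_n}` belongs to `U_ε` (and `1_{A_n}·(ε+1) = 1_{A_n}·((ε+1)·1_{A_n})`),
yet `ε+1 ∉ U_ε`. -/
theorem stmt_12 {Ω : Type*} [MeasurableSpace Ω] (P : MeasureTheory.Measure Ω)
    [IsProbabilityMeasure P]
    (A : ℕ → Set Ω) (hA : ∀ n, MeasurableSet (A n))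
    (hdisj : Pairwise (Function.onFun Disjoint A)) (hcover : (⋃ n, A n) = Set.univ)
    (hpos : ∀ n, 0 < P (A n))
    (ε : Ω →ₘ[P] ℝ) (hε : L0pp P ε) :
    (∀ n, (ε + 1) * ind P (A n) (hA n) ∈ Uset P A hA ε) ∧
    (∀ n, ind P (A n) (hA n) * (ε + 1) =
      ind P (A n) (hA n) * ((ε + 1) * ind P (A n) (hA n))) ∧
    (ε + 1) ∉ Uset P A hA ε ∧
    ¬ IsConcatClosed P (Uset P A hA ε) :=
  stmt_12_general P A hA hdisj hcover hpos ε hε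
end

section
/- For every X ∈ L⁰ and every ε ∈ L⁰₊₊, the element 0 is a greatest lower bound (in the a.e. order on L⁰) of the set {Y ∈ L⁰₊ : X ∈ Y·U_ε}, where U_ε := {Y ∈ L⁰ : ∃ finite I ⊆ ℕ such that |Y·1_{A_i}| ≤ ε a.e. for all i ∉ I}; i.e., the gauge function p_{U_ε} vanishes identically on L⁰. -/
open MeasureTheory Filter Pointwise Topology

variable {Ω : Type*} [MeasurableSpace Ω] (P : MeasureTheory.Measure Ω ) [IsProbabilityMeasure P]

/-!
Take `Y n = 1 / (n + 1) + 1_{⋃ i > n, A i} · |X| / ε`. Then `X / Y n` is bounded by `ε` on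
every `A i` with `i > n`, so `X ∈ (Y n) • U_ε`. Since the `A i` are disjoint, each `ω` lies in
at most one of them and thus eventually leaves the tails `⋃ i > n, A i`; hence `Y n → 0` a.e.,
which forces every lower bound of the gauge set to be `≤ 0`.
-/

section Tail

variable {α : Type*} {A : ℕ → Set α}

noncomputable def tailWeight (A : ℕ → Set α) (r : α → ℝ) (n : ℕ) : α → ℝ :=
  fun ω => ((n : ℝ) + 1)⁻¹ + (⋃ i > n, A i).indicator r ω

theorem measurable_tailWeight [MeasurableSpace α] (hA : ∀ n, MeasurableSet (A n)) {r : α → ℝ}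
    (hr : Measurable r) (n : ℕ) : Measurable (tailWeight A r n) :=
  measurable_const.add (hr.indicator (MeasurableSet.biUnion (Set.to_countable _) fun i _ => hA i))

theorem tailWeight_pos {r : α → ℝ} (n : ℕ) {ω : α} (hr : 0 ≤ r ω) :
    0 < tailWeight A r n ω :=
  add_pos_of_pos_of_nonneg (by positivity) (Set.indicator_nonneg (fun _ _ => hr) ω)

theorem le_tailWeight {r : α → ℝ} {n i : ℕ} {ω : α} (hi : n < i) (hω : ω ∈ A i) :
    r ω ≤ tailWeight A r n ω := by
  have hmem : ω ∈ ⋃ i > n, A i := Set.mem_biUnion hi hω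
  simp only [tailWeight, Set.indicator_of_mem hmem]
  linarith [show (0 : ℝ) < ((n : ℝ) + 1)⁻¹ by positivity]

theorem eventually_notMem_biUnion_gt (hdisj : Pairwise (Function.onFun Disjoint A))
    (ω : α) : ∀ᶠ n in atTop, ω ∉ ⋃ i > n, A i := by
  by_cases h : ∃ j, ω ∈ A j
  · obtain ⟨j, hj⟩ := h
    filter_upwards [eventually_ge_atTop j] with n hn hmem
    obtain ⟨i, hi, hωi⟩ := Set.mem_iUnion₂.1 hmem
    exact Set.disjoint_left.1 (hdisj (by omega : i ≠ j)) hωi hj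
  · refine Eventually.of_forall fun n hmem => h ?_
    obtain ⟨i, -, hωi⟩ := Set.mem_iUnion₂.1 hmem
    exact ⟨i, hωi⟩

theorem tendsto_tailWeight (hdisj : Pairwise (Function.onFun Disjoint A))
    (r : α → ℝ) (ω : α) : Tendsto (fun n => tailWeight A r n ω) atTop (𝓝 0) := by
  refine tendsto_inv_atTop_nhds_zero_nat.comp (tendsto_add_atTop_nat 1) |>.congr' ?_
  filter_upwards [eventually_notMem_biUnion_gt hdisj ω] with n hn
  simp [tailWeight, Set.indicator_of_notMem hn]

end Tail

theorem MeasureTheory.AEEqFun.le_of_forall_le_of_ae_tendsto {β : Type*} [TopologicalSpace β]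
    [PartialOrder β] [OrderClosedTopology β] {μ : Measure Ω} {b L : Ω →ₘ[μ] β} {Y : ℕ → Ω →ₘ[μ] β}
    (hb : ∀ n, b ≤ Y n) (hY : ∀ᵐ ω ∂μ, Tendsto (fun n => Y n ω) atTop (𝓝 (L ω))) : b ≤ L := by
  rw [← AEEqFun.coeFn_le]
  have hb' : ∀ᵐ ω ∂μ, ∀ n, b ω ≤ Y n ω := ae_all_iff.2 fun n => AEEqFun.coeFn_le.2 (hb n)
  filter_upwards [hb', hY] with ω hbω hYω
  exact ge_of_tendsto' hYω hbω

omit [IsProbabilityMeasure P] in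
theorem L0pp.nonneg_s14 {Y : Ω →ₘ[P] ℝ} (hY : L0pp P Y) : 0 ≤ Y := by
  rw [← AEEqFun.coeFn_le]
  filter_upwards [hY, AEEqFun.coeFn_zero (β := ℝ) (μ := P)] with ω hω h0
  exact h0 ▸ hω.le

omit [IsProbabilityMeasure P] in
theorem ind_ae_eq {A : Set Ω} (hA : MeasurableSet A) :
    ind P A hA =ᵐ[P] A.indicator fun _ => (1 : ℝ) :=
  AEEqFun.coeFn_mk _ _

omit [IsProbabilityMeasure P] in
theorem abs_mul_ind_le {A : Set Ω} (hA : MeasurableSet A) {Z ε : Ω →ₘ[P] ℝ}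
    (hε : ∀ᵐ ω ∂P, 0 ≤ ε ω) (hZ : ∀ᵐ ω ∂P, ω ∈ A → |Z ω| ≤ ε ω) :
    |Z * ind P A hA| ≤ ε := by
  rw [← AEEqFun.coeFn_le]
  filter_upwards [AEEqFun.coeFn_abs (Z * ind P A hA), AEEqFun.coeFn_mul Z (ind P A hA),
    ind_ae_eq P hA, hε, hZ] with ω habs hmul hind hεω hZω
  change |Z * ind P A hA| ω ≤ ε ω
  rw [habs, hmul, Pi.mul_apply, hind]
  by_cases hωA : ω ∈ A
  · simpa [hωA] using hZω hωA
  · simpa [hωA] using hεω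

omit [IsProbabilityMeasure P] in
theorem mem_gaugeSet_Uset {A : ℕ → Set Ω} {hA : ∀ n, MeasurableSet (A n)} {ε X Y : Ω →ₘ[P] ℝ}
    (hε : ∀ᵐ ω ∂P, 0 ≤ ε ω) (hY : L0pp P Y) (I : Finset ℕ)
    (hX : ∀ i ∉ I, ∀ᵐ ω ∂P, ω ∈ A i → |X ω| ≤ Y ω * ε ω) :
    Y ∈ gaugeSet P (Uset P A hA ε) X := by
  have hZm : AEStronglyMeasurable (fun ω => X ω / Y ω) P :=
    (X.measurable.div Y.measurable).aestronglyMeasurable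
  have hZ := AEEqFun.coeFn_mk _ hZm
  refine ⟨hY.nonneg_s14, AEEqFun.mk _ hZm, ⟨I, fun i hi => abs_mul_ind_le P (hA i) hε ?_⟩, ?_⟩
  · filter_upwards [hX i hi, hY, hZ] with ω hXω hYω hZω hωA
    rw [hZω, abs_div, abs_of_pos hYω, div_le_iff₀ hYω, mul_comm]
    exact hXω hωA
  · apply AEEqFun.ext
    filter_upwards [AEEqFun.coeFn_mul Y (AEEqFun.mk _ hZm), hY, hZ] with ω hmul hYω hZω
    change (Y * AEEqFun.mk _ hZm) ω = X ω
    rw [hmul, Pi.mul_apply, hZω]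
    field_simp

theorem stmt_14_general {Ω : Type*} [MeasurableSpace Ω] (P : MeasureTheory.Measure Ω)
    (A : ℕ → Set Ω) (hA : ∀ n, MeasurableSet (A n))
    (hdisj : Pairwise (Function.onFun Disjoint A))
    (X : Ω →ₘ[P] ℝ) (ε : Ω →ₘ[P] ℝ) (hε : L0pp P ε) :
    IsGLB (gaugeSet P (Uset P A hA ε) X) 0 := by
  set r : Ω → ℝ := fun ω => |X ω| / ε ω
  have hwm := measurable_tailWeight hA (X.measurable.abs.div ε.measurable)
  set Y : ℕ → Ω →ₘ[P] ℝ := fun n => AEEqFun.mk _ (hwm n).aestronglyMeasurable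
  have hY : ∀ n, Y n =ᵐ[P] tailWeight A r n := fun n => AEEqFun.coeFn_mk _ _
  have hmem : ∀ n, Y n ∈ gaugeSet P (Uset P A hA ε) X := by
    intro n
    refine mem_gaugeSet_Uset P (hε.mono fun _ h => h.le) ?_ (Finset.range (n + 1)) fun i hi => ?_
    · filter_upwards [hY n, hε] with ω hYω hεω
      exact hYω ▸ tailWeight_pos n (div_nonneg (abs_nonneg _) hεω.le)
    · filter_upwards [hY n, hε] with ω hYω hεω hωA
      calc |X ω| = r ω * ε ω := (div_mul_cancel₀ _ hεω.ne').symm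
        _ ≤ Y n ω * ε ω := by
          rw [hYω]
          exact mul_le_mul_of_nonneg_right
            (le_tailWeight (by simpa [Nat.lt_succ_iff] using hi) hωA) hεω.le
  refine ⟨fun _ hZ => hZ.1, fun b hb => AEEqFun.le_of_forall_le_of_ae_tendsto
    (fun n => hb (hmem n)) ?_⟩
  filter_upwards [ae_all_iff.2 hY, AEEqFun.coeFn_zero (β := ℝ) (μ := P)] with ω hYω h0
  simpa only [hYω, h0, Pi.zero_apply] using tendsto_tailWeight hdisj r ω

/-- the gauge of `U_ε` vanishes identically: `0` is a greatest lower
bound of `{Y ∈ L⁰₊ : X ∈ Y·U_ε}` for every `X ∈ L⁰`. -/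
theorem stmt_14 {Ω : Type*} [MeasurableSpace Ω] (P : MeasureTheory.Measure Ω)
    [IsProbabilityMeasure P]
    (A : ℕ → Set Ω) (hA : ∀ n, MeasurableSet (A n))
    (hdisj : Pairwise (Function.onFun Disjoint A)) (hcover : (⋃ n, A n) = Set.univ)
    (hpos : ∀ n, 0 < P (A n))
    (X : Ω →ₘ[P] ℝ) (ε : Ω →ₘ[P] ℝ) (hε : L0pp P ε) :
    IsGLB (gaugeSet P (Uset P A hA ε) X) 0 :=
  stmt_14_general P A hA hdisj X ε hε
end
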